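/- Let R be a commutative ring, G a finite group, and R → S a G-Galois extension of commutative rings (i.e. S^G = R and the map S ⊗_R S → ∏_{g∈G} S, x ⊗ y ↦ (x·g(y))_g, is an isomorphism). Then the twisted group algebra S⟨G⟩ (with underlying module S ⊗_ℤ ℤ[G] and multiplication (s·g)(t·h) = s·g(t)·gh) is isomorphic as an R-algebra to End_R(S), via the map sending s·g to the R-linear endomorphism t ↦ s·g(t). -/
import Mathlib


open TensorProduct

/-- The canonical map `S ⊗[R] S → ∏_{g ∈ G} S`, `x ⊗ y ↦ (x · g(y))_g`, for a
group `G` acting on the commutative `R`-algebra `S` by `R`-algebra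
automorphisms.  The action is `G`-Galois when (together with `S^G = R`) this
map is bijective. -/
noncomputable def galoisMap (R S G : Type*) [CommRing R] [CommRing S] [Algebra R S]
    [Group G] (φ : G →* (S ≃ₐ[R] S)) : S ⊗[R] S →ₗ[R] (G → S) :=
  TensorProduct.lift <| LinearMap.mk₂ R (fun x y g => x * φ g y)
    (fun x x' y => by funext g; simp [add_mul])
    (fun c x y => by funext g; simp [smul_mul_assoc])
    (fun x y y' => by funext g; simp [map_add, mul_add])
    (fun c x y => by funext g; simp [map_smul, mul_smul_comm])

/-- The underlying map of the twisted group algebra `S⟨G⟩ → End_R(S)`, sending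
`f = ∑ s_g · g` to the `R`-linear endomorphism `t ↦ ∑ s_g · g(t)`. -/
noncomputable def twistedGroupAlgebraMap (R S G : Type*) [CommRing R] [CommRing S]
    [Algebra R S] [Group G] [Fintype G] (φ : G →* (S ≃ₐ[R] S)) :
    (G → S) → Module.End R S :=
  fun f => ∑ g : G, (LinearMap.mulLeft R (f g)).comp (φ g).toLinearMap

section Aux

variable {R S G : Type*} [CommRing R] [CommRing S] [Algebra R S]
    [Group G] [Fintype G] (φ : G →* (S ≃ₐ[R] S))

noncomputable def muMap (α β : S →ₗ[R] S) : S ⊗[R] S →ₗ[R] S :=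
  (LinearMap.mul' R S).comp (TensorProduct.map α β)

lemma muMap_tmul (α β : S →ₗ[R] S) (x y : S) : muMap α β (x ⊗ₜ[R] y) = α x * β y := by
  simp [muMap]

lemma galoisMap_tmul (x y : S) (g : G) : galoisMap R S G φ (x ⊗ₜ[R] y) g = x * φ g y := by
  simp [galoisMap]

lemma twisted_apply (f : G → S) (t : S) :
    twistedGroupAlgebraMap R S G φ f t = ∑ g : G, f g * φ g t := by
  simp [twistedGroupAlgebraMap]

noncomputable def trMap : S →ₗ[R] S := ∑ g : G, (φ g).toLinearMap

lemma trMap_apply (s : S) : trMap φ s = ∑ g : G, φ g s := by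
  simp [trMap]

lemma trMap_fixed (h : G) (s : S) : φ h (trMap φ s) = trMap φ s := by
  simp only [trMap_apply, map_sum]
  exact Fintype.sum_bijective (fun g => h * g) (Group.mulLeft_bijective h) _ _
    (fun g => by rw [← AlgEquiv.mul_apply, ← map_mul])

lemma key_inj (f : G → S) (z : S ⊗[R] S) :
    muMap LinearMap.id (twistedGroupAlgebraMap R S G φ f : S →ₗ[R] S) z
      = ∑ g : G, f g * galoisMap R S G φ z g := by
  induction z using TensorProduct.induction_on with
  | zero => simp
  | tmul x y =>
      simp only [muMap_tmul, LinearMap.id_apply, twisted_apply, galoisMap_tmul,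
        Finset.mul_sum]
      exact Finset.sum_congr rfl fun g _ => by ring
  | add a b ha hb =>
      simp only [map_add, ha, hb, Pi.add_apply, mul_add, Finset.sum_add_distrib]

lemma key_S1 (E : S →ₗ[R] S) (z : S ⊗[R] S) (t : S) :
    ∑ g : G, muMap E (φ g).toLinearMap z * φ g t
      = muMap E ((trMap φ).comp (LinearMap.mulRight R t)) z := by
  induction z using TensorProduct.induction_on with
  | zero => simp
  | tmul x y =>
      simp only [muMap_tmul, AlgEquiv.toLinearMap_apply, LinearMap.comp_apply,
        LinearMap.mulRight_apply, trMap_apply, Finset.mul_sum, map_mul]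
      exact Finset.sum_congr rfl fun g _ => by ring
  | add a b ha hb =>
      simp only [map_add, add_mul, Finset.sum_add_distrib, ha, hb]

lemma key_S2 (hfix : ∀ s : S, (∀ g : G, φ g s = s) → ∃ r : R, algebraMap R S r = s)
    (E : S →ₗ[R] S) (z : S ⊗[R] S) (t : S) :
    muMap E ((trMap φ).comp (LinearMap.mulRight R t)) z
      = E (muMap LinearMap.id ((trMap φ).comp (LinearMap.mulRight R t)) z) := by
  induction z using TensorProduct.induction_on with
  | zero => simp
  | tmul x y =>
      simp only [muMap_tmul, LinearMap.comp_apply, LinearMap.mulRight_apply,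
        LinearMap.id_apply]
      obtain ⟨r, hr⟩ := hfix (trMap φ (y * t)) (fun g => trMap_fixed φ g (y * t))
      rw [← hr, mul_comm (E x), ← Algebra.smul_def, ← map_smul, Algebra.smul_def,
        mul_comm]
  | add a b ha hb =>
      simp only [map_add, ha, hb]

lemma key_S3 (z : S ⊗[R] S) (t : S) :
    muMap LinearMap.id ((trMap φ).comp (LinearMap.mulRight R t)) z
      = ∑ g : G, galoisMap R S G φ z g * φ g t := by
  induction z using TensorProduct.induction_on with
  | zero => simp
  | tmul x y =>
      simp only [muMap_tmul, LinearMap.comp_apply, LinearMap.mulRight_apply,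
        LinearMap.id_apply, trMap_apply, Finset.mul_sum, galoisMap_tmul, map_mul]
      exact Finset.sum_congr rfl fun g _ => by ring
  | add a b ha hb =>
      simp only [map_add, Pi.add_apply, add_mul, Finset.sum_add_distrib, ha, hb]

end Aux

/-- For a `G`-Galois extension `R → S` of commutative rings (`S^G = R` and
`S ⊗_R S ≅ ∏_G S` via `x ⊗ y ↦ (x·g(y))_g`), the twisted group algebra `S⟨G⟩`
(with underlying module `G → S` and multiplication
`(s·g)(t·h) = (s·g(t))·(gh)`) is isomorphic as an `R`-algebra to `End_R(S)`
via `s·g ↦ (t ↦ s·g(t))`: this map is bijective, unital, and carries the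
twisted convolution product to composition (it is also visibly additive and
`R`-linear). -/
theorem twisted_group_algebra_iso_end (R S G : Type*) [CommRing R] [CommRing S]
    [Algebra R S] [Group G] [Fintype G] [DecidableEq G]
    (φ : G →* (S ≃ₐ[R] S))
    (hinj : Function.Injective (algebraMap R S))
    (hfix : ∀ s : S, (∀ g : G, φ g s = s) → ∃ r : R, algebraMap R S r = s)
    (hgal : Function.Bijective (galoisMap R S G φ)) :
    Function.Bijective (twistedGroupAlgebraMap R S G φ) ∧
    twistedGroupAlgebraMap R S G φ (fun g => if g = 1 then 1 else 0) = 1 ∧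
    (∀ f f' : G → S,
      twistedGroupAlgebraMap R S G φ (fun g => ∑ h : G, f h * φ h (f' (h⁻¹ * g))) =
        twistedGroupAlgebraMap R S G φ f * twistedGroupAlgebraMap R S G φ f') := by
  obtain ⟨z₀, hz₀⟩ := hgal.surjective (fun g => if g = 1 then 1 else 0)
  refine ⟨⟨?_, ?_⟩, ?_, ?_⟩
  · -- injective
    intro f f' hEq
    funext h
    obtain ⟨z, hz⟩ := hgal.surjective (fun g => if g = h then 1 else 0)
    have recover : ∀ f₀ : G → S,
        muMap LinearMap.id (twistedGroupAlgebraMap R S G φ f₀ : S →ₗ[R] S) z = f₀ h := by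
      intro f₀
      rw [key_inj, hz]
      rw [Finset.sum_eq_single h] <;> simp +contextual
    rw [← recover f, ← recover f', hEq]
  · -- surjective
    intro E
    refine ⟨fun g => muMap E (φ g).toLinearMap z₀, ?_⟩
    apply LinearMap.ext
    intro t
    rw [twisted_apply, key_S1, key_S2 φ hfix, key_S3, hz₀]
    rw [Finset.sum_eq_single 1] <;> simp +contextual
  · -- unit
    apply LinearMap.ext
    intro t
    rw [twisted_apply, Finset.sum_eq_single 1] <;> simp +contextual
  · -- multiplicative
    intro f f'
    apply LinearMap.ext
    intro t
    rw [Module.End.mul_apply, twisted_apply, twisted_apply, twisted_apply]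
    simp only [Finset.sum_mul, Finset.mul_sum, map_sum, map_mul]
    rw [Finset.sum_comm]
    refine Finset.sum_congr rfl fun h _ => ?_
    refine Fintype.sum_bijective (fun k => h⁻¹ * k) (Group.mulLeft_bijective h⁻¹) _ _
      (fun k => ?_)
    have : φ h (φ (h⁻¹ * k) t) = φ k t := by
      rw [← AlgEquiv.mul_apply, ← map_mul, mul_inv_cancel_left]
    rw [this]
    ring
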